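/- Let d, N ≥ 1, let A : ℝ^d → Matrix (Fin d) (Fin d) ℝ satisfy, for every z ≠ 0: A(z) is symmetric, A(−z) = A(z), and A(z)·z = 0, with A(0) = 0. Given v₁, …, v_N ∈ ℝ^d, s₁, …, s_N ∈ ℝ^d, a time step Δt ∈ ℝ, define G(vᵢ) := (1/N) ∑_{j=1}^N A(vᵢ − v_j)(sᵢ − s_j) and vᵢ⁺ := vᵢ − Δt · G(vᵢ). Then (1/N) ∑_{i=1}^N |vᵢ⁺|² = (1/N) ∑_{i=1}^N |vᵢ|² + Δt² (1/N) ∑_{i=1}^N |G(vᵢ)|²; in particular the kinetic energy is conserved up to O(Δt) per unit time. -/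

import Mathlib

/-!
Testing the step against `vᵢ` and expanding the square gives
`|vᵢ⁺|² = |vᵢ|² - 2Δt vᵢ·G(vᵢ) + Δt²|G(vᵢ)|²`, so it suffices that `∑ᵢ vᵢ·G(vᵢ) = 0`.
Swapping `i` and `j` (using that `A` is even) symmetrises this double sum into
`½ ∑ᵢⱼ (vᵢ - vⱼ)·A(vᵢ - vⱼ)(sᵢ - sⱼ)`, and each term vanishes because `A(z)` is symmetric
and kills `z`.
-/

open Matrix

theorem Fintype.sum_sum_eq_zero_of_add_swap_eq_zero {ι M : Type*} [Fintype ι]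
    [AddCommMonoid M] [IsAddTorsionFree M] (f : ι → ι → M) (hf : ∀ i j, f i j + f j i = 0) :
    ∑ i, ∑ j, f i j = 0 := by
  rw [← two_nsmul_eq_zero, two_nsmul]
  nth_rewrite 2 [Finset.sum_comm]
  simp only [← Finset.sum_add_distrib, hf, Finset.sum_const_zero]

section Landau

variable {R n : Type*} [CommRing R] [Fintype n] {A : (n → R) → Matrix n n R}

theorem dotProduct_mulVec_self_eq_zero
    (hA_symm : ∀ z : n → R, z ≠ 0 → (A z).IsSymm)
    (hA_proj : ∀ z : n → R, z ≠ 0 → A z *ᵥ z = 0) (z w : n → R) :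
    z ⬝ᵥ A z *ᵥ w = 0 := by
  obtain rfl | hz := eq_or_ne z 0
  · exact zero_dotProduct _
  · rw [dotProduct_mulVec, ← mulVec_transpose, (hA_symm z hz).eq, hA_proj z hz,
      zero_dotProduct]

theorem dotProduct_mulVec_add_swap_eq_zero
    (hA_symm : ∀ z : n → R, z ≠ 0 → (A z).IsSymm)
    (hA_even : ∀ z : n → R, z ≠ 0 → A (-z) = A z)
    (hA_proj : ∀ z : n → R, z ≠ 0 → A z *ᵥ z = 0) (x y p q : n → R) :
    x ⬝ᵥ A (x - y) *ᵥ (p - q) + y ⬝ᵥ A (y - x) *ᵥ (q - p) = 0 := by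
  have h_swap : A (y - x) = A (x - y) := by
    obtain h | h := eq_or_ne (x - y) 0
    · rw [sub_eq_zero.mp h]
    · rw [← neg_sub, hA_even _ h]
  rw [h_swap, ← neg_sub p q, mulVec_neg, dotProduct_neg, ← sub_eq_add_neg, ← sub_dotProduct]
  exact dotProduct_mulVec_self_eq_zero hA_symm hA_proj _ _

theorem sum_dotProduct_sum_mulVec_eq_zero [IsAddTorsionFree R] {ι : Type*} [Fintype ι]
    (hA_symm : ∀ z : n → R, z ≠ 0 → (A z).IsSymm)
    (hA_even : ∀ z : n → R, z ≠ 0 → A (-z) = A z)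
    (hA_proj : ∀ z : n → R, z ≠ 0 → A z *ᵥ z = 0) (v s : ι → n → R) :
    ∑ i, v i ⬝ᵥ ∑ j, A (v i - v j) *ᵥ (s i - s j) = 0 := by
  simp only [dotProduct_sum]
  exact Fintype.sum_sum_eq_zero_of_add_swap_eq_zero _ fun i j =>
    dotProduct_mulVec_add_swap_eq_zero hA_symm hA_even hA_proj _ _ _ _

end Landau

theorem sum_sub_smul_sq {R n : Type*} [CommRing R] [Fintype n] (x y : n → R) (t : R) :
    ∑ k, (x - t • y) k ^ 2 = ∑ k, x k ^ 2 - 2 * t * (x ⬝ᵥ y) + t ^ 2 * ∑ k, y k ^ 2 := by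
  simp only [dotProduct, Finset.mul_sum, ← Finset.sum_sub_distrib, ← Finset.sum_add_distrib]
  refine Finset.sum_congr rfl fun k _ => ?_
  simp only [Pi.sub_apply, Pi.smul_apply, smul_eq_mul]
  ring

theorem stmt3_general (d N : ℕ)
    (A : (Fin d → ℝ) → Matrix (Fin d) (Fin d) ℝ)
    (hA_symm : ∀ z : Fin d → ℝ, z ≠ 0 → (A z).IsSymm)
    (hA_even : ∀ z : Fin d → ℝ, z ≠ 0 → A (-z) = A z)
    (hA_proj : ∀ z : Fin d → ℝ, z ≠ 0 → (A z).mulVec z = 0)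
    (v s : Fin N → Fin d → ℝ) (Δt : ℝ)
    (G : Fin N → Fin d → ℝ)
    (hG : ∀ i, G i = ((1 : ℝ) / (N : ℝ)) • ∑ j : Fin N, (A (v i - v j)).mulVec (s i - s j))
    (vp : Fin N → Fin d → ℝ)
    (hvp : ∀ i, vp i = v i - Δt • G i) :
    ((1 : ℝ) / (N : ℝ)) * ∑ i : Fin N, ∑ k : Fin d, vp i k ^ 2
      = ((1 : ℝ) / (N : ℝ)) * ∑ i : Fin N, ∑ k : Fin d, v i k ^ 2
        + Δt ^ 2 * (((1 : ℝ) / (N : ℝ)) * ∑ i : Fin N, ∑ k : Fin d, G i k ^ 2) := by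
  have h_work : ∑ i, v i ⬝ᵥ G i = 0 := by
    simp only [hG, dotProduct_smul, ← Finset.smul_sum,
      sum_dotProduct_sum_mulVec_eq_zero hA_symm hA_even hA_proj v s, smul_zero]
  simp only [hvp, sum_sub_smul_sq, Finset.sum_add_distrib, Finset.sum_sub_distrib,
    ← Finset.mul_sum, h_work]
  ring

/-- Energy balance of the forward-Euler step of the score-based
particle method: with `G(vᵢ) = (1/N) ∑ⱼ A(vᵢ - vⱼ)(sᵢ - sⱼ)` and
`vᵢ⁺ = vᵢ - Δt G(vᵢ)`, for a symmetric, even kernel with the projection property,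
`(1/N) ∑ᵢ |vᵢ⁺|² = (1/N) ∑ᵢ |vᵢ|² + Δt² (1/N) ∑ᵢ |G(vᵢ)|²`,
so kinetic energy is conserved up to `O(Δt)` per unit time. -/
theorem stmt3 (d N : ℕ) (hd : 1 ≤ d) (hN : 1 ≤ N)
    (A : (Fin d → ℝ) → Matrix (Fin d) (Fin d) ℝ)
    (hA_symm : ∀ z : Fin d → ℝ, z ≠ 0 → (A z).IsSymm)
    (hA_even : ∀ z : Fin d → ℝ, z ≠ 0 → A (-z) = A z)
    (hA_proj : ∀ z : Fin d → ℝ, z ≠ 0 → (A z).mulVec z = 0)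
    (hA_zero : A 0 = 0)
    (v s : Fin N → Fin d → ℝ) (Δt : ℝ)
    (G : Fin N → Fin d → ℝ)
    (hG : ∀ i, G i = ((1 : ℝ) / (N : ℝ)) • ∑ j : Fin N, (A (v i - v j)).mulVec (s i - s j))
    (vp : Fin N → Fin d → ℝ)
    (hvp : ∀ i, vp i = v i - Δt • G i) :
    ((1 : ℝ) / (N : ℝ)) * ∑ i : Fin N, ∑ k : Fin d, vp i k ^ 2
      = ((1 : ℝ) / (N : ℝ)) * ∑ i : Fin N, ∑ k : Fin d, v i k ^ 2
        + Δt ^ 2 * (((1 : ℝ) / (N : ℝ)) * ∑ i : Fin N, ∑ k : Fin d, G i k ^ 2) :=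
  stmt3_general d N A hA_symm hA_even hA_proj v s Δt G hG vp hvp
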